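/- arXiv:1410.3361 — 7 statements merged into one kernel-verified Lean document; each statement's English description precedes it below -/
import Mathlib

section
/- Let m, p ≥ 1, let A be an invertible symmetric m×m real matrix, and let G be the (m+p)×(m+p) block matrix [[A, 0], [0, 0]]. If an (m+p)×(m+p) real matrix J, written in block form J = [[J₁₁, J₁₂], [J₂₁, J₂₂]] with J₁₁ of size m×m, satisfies J G Jᵀ = G, then J₁₁ A J₁₁ᵀ = A, the block J₁₁ is invertible, and J₂₁ = 0. -/
open Matrix

/-!
Write `J = [[B, C], [D, E]]`. Multiplying out, `J G Jᵀ = [[B A Bᵀ, B A Dᵀ], [D A Bᵀ, D A Dᵀ]]`,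
so the upper-left block of the hypothesis is `B A Bᵀ = A`. Taking determinants gives
`(det B)² det A = det A`, hence `det B` is a unit since `det A` is. The lower-left block reads
`D (A Bᵀ) = 0`, and `A Bᵀ` is invertible, so `D = 0`.
-/

namespace Matrix

variable {l m n R : Type*} [Fintype m] [Fintype n] [CommRing R]

theorem mul_fromBlocks_zero_mul_transpose [Fintype l]
    (J : Matrix (m ⊕ l) (m ⊕ l) R) (A : Matrix m m R) :
    J * fromBlocks A 0 0 0 * Jᵀ =
      fromBlocks (J.toBlocks₁₁ * A * J.toBlocks₁₁ᵀ) (J.toBlocks₁₁ * A * J.toBlocks₂₁ᵀ)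
        (J.toBlocks₂₁ * A * J.toBlocks₁₁ᵀ) (J.toBlocks₂₁ * A * J.toBlocks₂₁ᵀ) := by
  conv_lhs => rw [← fromBlocks_toBlocks J]
  simp only [fromBlocks_transpose, fromBlocks_multiply, Matrix.mul_zero, Matrix.zero_mul,
    add_zero]

theorem isUnit_det_of_mul_mul_transpose_eq [DecidableEq m] {A B : Matrix m m R}
    (hA : IsUnit A.det) (h : B * A * Bᵀ = A) : IsUnit B.det := by
  have hdet : B.det * B.det * A.det = 1 * A.det := by
    simpa only [det_mul, det_transpose, one_mul, mul_right_comm] using congrArg det h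
  exact isUnit_iff_exists_inv.mpr ⟨_, hA.mul_left_injective hdet⟩

theorem eq_zero_of_mul_eq_zero_of_isUnit_det [DecidableEq n] {D : Matrix l n R}
    {M : Matrix n n R} (hM : IsUnit M.det) (h : D * M = 0) : D = 0 := by
  let := M.invertibleOfIsUnitDet hM
  exact mul_left_injective_of_invertible M (by simpa only [Matrix.zero_mul] using h)

end Matrix

theorem stmt_0_general (m p : ℕ)
    (A : Matrix (Fin m) (Fin m) ℝ) (hAinv : IsUnit A.det)
    (J : Matrix (Fin m ⊕ Fin p) (Fin m ⊕ Fin p) ℝ)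
    (hJ : J * Matrix.fromBlocks A 0 0 0 * Jᵀ = Matrix.fromBlocks A 0 0 0) :
    J.toBlocks₁₁ * A * (J.toBlocks₁₁)ᵀ = A ∧
    IsUnit (J.toBlocks₁₁).det ∧
    J.toBlocks₂₁ = 0 := by
  rw [mul_fromBlocks_zero_mul_transpose] at hJ
  obtain ⟨h₁₁, -, h₂₁, -⟩ := fromBlocks_inj.mp hJ
  have hB : IsUnit J.toBlocks₁₁.det := isUnit_det_of_mul_mul_transpose_eq hAinv h₁₁
  have hABt : IsUnit (A * J.toBlocks₁₁ᵀ).det := by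
    rw [det_mul, det_transpose]
    exact hAinv.mul hB
  exact ⟨h₁₁, hB, eq_zero_of_mul_eq_zero_of_isUnit_det hABt (by rwa [← Matrix.mul_assoc])⟩

/-- If `J` preserves the degenerate block metric `G = [[A,0],[0,0]]`
(with `A` an invertible symmetric `m × m` matrix), i.e. `J * G * Jᵀ = G`, then the
upper-left block satisfies `J₁₁ * A * J₁₁ᵀ = A`, `J₁₁` is invertible, and `J₂₁ = 0`. -/
theorem stmt_0 (m p : ℕ) (hm : 1 ≤ m) (hp : 1 ≤ p)
    (A : Matrix (Fin m) (Fin m) ℝ) (hAsymm : A.IsSymm) (hAinv : IsUnit A.det)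
    (J : Matrix (Fin m ⊕ Fin p) (Fin m ⊕ Fin p) ℝ)
    (hJ : J * Matrix.fromBlocks A 0 0 0 * Jᵀ = Matrix.fromBlocks A 0 0 0) :
    J.toBlocks₁₁ * A * (J.toBlocks₁₁)ᵀ = A ∧
    IsUnit (J.toBlocks₁₁).det ∧
    J.toBlocks₂₁ = 0 :=
  stmt_0_general m p A hAinv J hJ
end

section
/- Let U ⊆ ℝ² be open, let g^{ij} be the constant 2×2 matrix with g¹¹ = 1 and all other entries 0, and let b^{ij}_k : U → ℝ (i,j,k ∈ {1,2}) be smooth functions such that the pair (g, b) satisfies Grinberg's conditions on U. Then b^{ij}_k = 0 on U for every triple (i,j,k) other than (1,2,2) and (2,1,2), one has b²¹₂ = −b¹²₂, and ∂₁ b¹²₂ = (b¹²₂)² on U. -/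
/-- Partial derivative `∂_k f` of a function of `n` real variables. -/
noncomputable def pd {n : ℕ} (k : Fin n) (f : (Fin n → ℝ) → ℝ) (q : Fin n → ℝ) : ℝ :=
  fderiv ℝ f q (Pi.single k 1)

/-- Grinberg's conditions (G1)–(G5) for a constant metric `g` and symbols `b^{ij}_k` on an
open set `U ⊆ ℝⁿ` (since `g` is constant, `∂_k g^{ij} = 0` in (G2)); these are exactly the
conditions under which `P^{ij} = g^{ij} d/dx + b^{ij}_k u^k_x` is a Hamiltonian operator of
Dubrovin–Novikov type. -/
def GrinbergConds {n : ℕ} (U : Set (Fin n → ℝ)) (g : Matrix (Fin n) (Fin n) ℝ)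
    (b : Fin n → Fin n → Fin n → (Fin n → ℝ) → ℝ) : Prop :=
  (∀ i j, g i j = g j i) ∧
  (∀ i j k : Fin n, ∀ u ∈ U, b i j k u + b j i k u = 0) ∧
  (∀ i j k : Fin n, ∀ u ∈ U, ∑ t, g t k * b j i t u = ∑ t, g t j * b k i t u) ∧
  (∀ i j k r : Fin n, ∀ u ∈ U,
      ∑ t, (b i j t u * b t k r u - b i k t u * b t j r u)
        = ∑ t, g t i * (pd t (b j k r) u - pd r (b j k t) u)) ∧
  (∀ i j k q r : Fin n, ∀ u ∈ U,
      (∑ t, ((pd q (b i j t) u - pd t (b i j q) u) * b t k r u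
            + (pd r (b i j t) u - pd t (b i j r) u) * b t k q u))
      + (∑ t, ((pd q (b j k t) u - pd t (b j k q) u) * b t i r u
            + (pd r (b j k t) u - pd t (b j k r) u) * b t i q u))
      + (∑ t, ((pd q (b k i t) u - pd t (b k i q) u) * b t j r u
            + (pd r (b k i t) u - pd t (b k i r) u) * b t j q u)) = 0)

/-- for the two-component degenerate metric `g = diag(1,0)`, Grinberg's
conditions force all symbols `b^{ij}_k` to vanish except `b¹²₂` and `b²¹₂ = −b¹²₂`, and
`∂₁ b¹²₂ = (b¹²₂)²`. (Indices are 0-based: `b¹²₂ = b 0 1 1`.) -/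
theorem stmt_4 (U : Set (Fin 2 → ℝ)) (hU : IsOpen U)
    (b : Fin 2 → Fin 2 → Fin 2 → (Fin 2 → ℝ) → ℝ)
    (hb : ∀ i j k, ContDiffOn ℝ (⊤ : ℕ∞) (b i j k) U)
    (hG : GrinbergConds U !![(1 : ℝ), 0; 0, 0] b) :
    ∀ u ∈ U,
      (∀ i j k : Fin 2,
        ¬(i = 0 ∧ j = 1 ∧ k = 1) → ¬(i = 1 ∧ j = 0 ∧ k = 1) → b i j k u = 0) ∧
      b 1 0 1 u = - b 0 1 1 u ∧
      pd 0 (b 0 1 1) u = (b 0 1 1 u) ^ 2 := by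

  obtain ⟨h1, h2, h3, h4, h5⟩ := hG
  -- key: b 1 i 0 = 0 on U
  have key : ∀ i : Fin 2, ∀ u ∈ U, b 1 i 0 u = 0 := by
    intro i u hu
    have := h3 i 1 0 u hu
    simp [Fin.sum_univ_two, Matrix.cons_val_zero, Matrix.cons_val_one, Matrix.head_cons] at this
    linarith
  have anti : ∀ i j k : Fin 2, ∀ u ∈ U, b j i k u = - b i j k u := by
    intro i j k u hu
    have := h2 i j k u hu
    linarith
  have zero0 : ∀ i j : Fin 2, ∀ u ∈ U, b i j 0 u = 0 := by
    intro i j u hu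
    fin_cases i <;> fin_cases j
    · show b 0 0 0 u = 0
      have h := anti 0 0 0 u hu; linarith
    · show b 0 1 0 u = 0
      have h := anti 1 0 0 u hu; rw [h, key 0 u hu]; ring
    · exact key 0 u hu
    · exact key 1 u hu
  have zdiag : ∀ i k : Fin 2, ∀ u ∈ U, b i i k u = 0 := by
    intro i k u hu
    have h := anti i i k u hu; linarith
  -- pd of functions vanishing on U is 0 at u ∈ U
  have pdzero : ∀ (k : Fin 2) (f : (Fin 2 → ℝ) → ℝ), (∀ v ∈ U, f v = 0) → ∀ u ∈ U,
      pd k f u = 0 := by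
    intro k f hf u hu
    have hev : f =ᶠ[nhds u] (fun _ => (0 : ℝ)) := by
      filter_upwards [hU.mem_nhds hu] with v hv
      exact hf v hv
    unfold pd
    rw [hev.fderiv_eq]
    simp
  intro u hu
  refine ⟨?_, ?_, ?_⟩
  · intro i j k hn1 hn2
    fin_cases i <;> fin_cases j <;> fin_cases k <;> simp only [Fin.mk_zero, Fin.mk_one] <;>
      first
        | exact zero0 _ _ u hu
        | exact zdiag _ _ u hu
        | (exfalso; exact hn1 ⟨rfl, rfl, rfl⟩)
        | (exfalso; exact hn2 ⟨rfl, rfl, rfl⟩)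
  · exact anti 0 1 1 u hu
  · have h := h4 0 0 1 1 u hu
    simp only [Fin.sum_univ_two, Matrix.cons_val_zero, Matrix.cons_val_one,
      Matrix.head_cons, Matrix.of_apply, Matrix.cons_val', Matrix.empty_val',
      Matrix.cons_val_fin_one] at h
    rw [zdiag 0 0 u hu, zdiag 0 1 u hu, zdiag 1 1 u hu, zero0 0 1 u hu,
      anti 0 1 1 u hu, pdzero 1 (b 0 1 0) (zero0 0 1) u hu] at h
    nlinarith [h]
end

section
/- Let U ⊆ ℝ³ be open and let μ, ν, φ, η : U → ℝ be differentiable functions satisfying ∂₁μ = μ² + νφ, ∂₁ν = ν(μ + η), ∂₁φ = φ(μ + η), ∂₁η = η² + νφ on U, where ∂₁ denotes the partial derivative with respect to the first coordinate u¹. Then the following are equivalent: (i) the equations (∂₁φ)μ = φ(∂₁μ), (∂₁η)ν = η(∂₁ν), and (∂₁φ)ν + (∂₁η)μ = (∂₁μ)η + (∂₁ν)φ hold on U; (ii) at every point of U, either ημ = νφ, or simultaneously φ = 0, ν = 0 and η = μ. -/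
/-- given the (G4) system for `μ, ν, φ, η`, the (G5) equations are equivalent
to the pointwise alternative `ημ = νφ`, or `φ = 0 ∧ ν = 0 ∧ η = μ`. -/
theorem stmt_8 (U : Set (Fin 3 → ℝ)) (hU : IsOpen U)
    (μ ν φ η : (Fin 3 → ℝ) → ℝ)
    (hμ : DifferentiableOn ℝ μ U) (hν : DifferentiableOn ℝ ν U)
    (hφ : DifferentiableOn ℝ φ U) (hη : DifferentiableOn ℝ η U)
    (e1 : ∀ u ∈ U, pd 0 μ u = μ u ^ 2 + ν u * φ u)
    (e2 : ∀ u ∈ U, pd 0 ν u = ν u * (μ u + η u))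
    (e3 : ∀ u ∈ U, pd 0 φ u = φ u * (μ u + η u))
    (e4 : ∀ u ∈ U, pd 0 η u = η u ^ 2 + ν u * φ u) :
    (∀ u ∈ U, pd 0 φ u * μ u = φ u * pd 0 μ u ∧
              pd 0 η u * ν u = η u * pd 0 ν u ∧
              pd 0 φ u * ν u + pd 0 η u * μ u = pd 0 μ u * η u + pd 0 ν u * φ u)
    ↔ (∀ u ∈ U, η u * μ u = ν u * φ u ∨ (φ u = 0 ∧ ν u = 0 ∧ η u = μ u)) := by
  constructor
  · intro h u hu
    obtain ⟨h1, h2, h3⟩ := h u hu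
    simp only [e1 u hu, e2 u hu, e3 u hu, e4 u hu] at h1 h2 h3
    by_cases hX : η u * μ u = ν u * φ u
    · exact Or.inl hX
    · refine Or.inr ⟨?_, ?_, ?_⟩
      · rcases mul_eq_zero.1 (show φ u * (η u * μ u - ν u * φ u) = 0 by nlinarith [h1]) with h | h
        · exact h
        · exact absurd (by linarith) hX
      · rcases mul_eq_zero.1 (show ν u * (η u * μ u - ν u * φ u) = 0 by nlinarith [h2]) with h | h
        · exact h
        · exact absurd (by linarith) hX
      · rcases mul_eq_zero.1 (show (η u - μ u) * (η u * μ u - ν u * φ u) = 0 by nlinarith [h3]) with h | h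
        · linarith
        · exact absurd (by linarith) hX
  · intro h u hu
    rw [e1 u hu, e2 u hu, e3 u hu, e4 u hu]
    rcases h u hu with hX | ⟨hφ0, hν0, hημ⟩
    · exact ⟨by linear_combination φ u * hX, by linear_combination (-ν u) * hX,
        by linear_combination (η u - μ u) * hX⟩
    · rw [hφ0, hν0, hημ]; refine ⟨by ring, by ring, by ring⟩
end

section
/- Let I ⊆ ℝ be an open interval, V ⊆ ℝ² open, and let μ, φ, η : I × V → ℝ be smooth functions satisfying ∂₁μ = μ(μ + η), ∂₁φ = φ(μ + η), ∂₁η = η(μ + η) on I × V, where ∂₁ denotes the derivative with respect to the first coordinate u¹ and the remaining coordinates w = (u², u³) range over V. Assume that φ, η and μ + η vanish nowhere on I × V. Then there exist smooth functions S, F, R : V → ℝ, with R and S + 1 nowhere vanishing, such that for all (u¹, w) ∈ I × V: F(w) − (S(w) + 1)u¹ ≠ 0, and μ(u¹, w) = S(w)/(F(w) − (S(w)+1)u¹), φ(u¹, w) = −R(w)/(F(w) − (S(w)+1)u¹), η(u¹, w) = 1/(F(w) − (S(w)+1)u¹). -/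
lemma aux_const_of_hasDerivAt_zero {s : Set ℝ} (hs : Convex ℝ s) {f : ℝ → ℝ}
    (hf : ∀ x ∈ s, HasDerivAt f 0 x) {x y : ℝ} (hx : x ∈ s) (hy : y ∈ s) : f x = f y := by
  have h := hs.norm_image_sub_le_of_norm_hasDerivWithin_le (C := 0) (f' := fun _ => (0:ℝ))
    (fun z hz => (hf z hz).hasDerivWithinAt) (fun z hz => by simp) hx hy
  simp only [zero_mul, norm_le_zero_iff, sub_eq_zero] at h
  exact h.symm

/-- solution of the system `∂₁μ = μ(μ+η)`, `∂₁φ = φ(μ+η)`, `∂₁η = η(μ+η)`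
on `I × V` in the branch where `φ`, `η` and `μ + η` vanish nowhere: there are smooth
functions `S, F, R` of the parameters `w = (u², u³)`, with `R` and `S + 1` nowhere zero,
such that `μ = S/(F − (S+1)u¹)`, `φ = −R/(F − (S+1)u¹)`, `η = 1/(F − (S+1)u¹)`. -/
theorem stmt_9 (I : Set ℝ) (hIopen : IsOpen I) (hIconv : Convex ℝ I)
    (V : Set (Fin 2 → ℝ)) (hVopen : IsOpen V)
    (μ φ η : ℝ × (Fin 2 → ℝ) → ℝ)
    (hμ : ContDiffOn ℝ (⊤ : ℕ∞) μ (I ×ˢ V)) (hφ : ContDiffOn ℝ (⊤ : ℕ∞) φ (I ×ˢ V))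
    (hη : ContDiffOn ℝ (⊤ : ℕ∞) η (I ×ˢ V))
    (eμ : ∀ t ∈ I, ∀ w ∈ V,
      deriv (fun x => μ (x, w)) t = μ (t, w) * (μ (t, w) + η (t, w)))
    (eφ : ∀ t ∈ I, ∀ w ∈ V,
      deriv (fun x => φ (x, w)) t = φ (t, w) * (μ (t, w) + η (t, w)))
    (eη : ∀ t ∈ I, ∀ w ∈ V,
      deriv (fun x => η (x, w)) t = η (t, w) * (μ (t, w) + η (t, w)))
    (hφne : ∀ t ∈ I, ∀ w ∈ V, φ (t, w) ≠ 0)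
    (hηne : ∀ t ∈ I, ∀ w ∈ V, η (t, w) ≠ 0)
    (hsumne : ∀ t ∈ I, ∀ w ∈ V, μ (t, w) + η (t, w) ≠ 0) :
    ∃ S F R : (Fin 2 → ℝ) → ℝ,
      ContDiffOn ℝ (⊤ : ℕ∞) S V ∧ ContDiffOn ℝ (⊤ : ℕ∞) F V ∧ ContDiffOn ℝ (⊤ : ℕ∞) R V ∧
      (∀ w ∈ V, R w ≠ 0 ∧ S w + 1 ≠ 0) ∧
      (∀ t ∈ I, ∀ w ∈ V,
        F w - (S w + 1) * t ≠ 0 ∧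
        μ (t, w) = S w / (F w - (S w + 1) * t) ∧
        φ (t, w) = - R w / (F w - (S w + 1) * t) ∧
        η (t, w) = 1 / (F w - (S w + 1) * t)) := by
  by_cases hI : I.Nonempty
  · obtain ⟨t₀, ht₀⟩ := hI
    -- differentiability in the first variable
    have hIV : IsOpen (I ×ˢ V) := hIopen.prod hVopen
    have hdiff : ∀ (f : ℝ × (Fin 2 → ℝ) → ℝ), ContDiffOn ℝ (⊤ : ℕ∞) f (I ×ˢ V) →
        ∀ t ∈ I, ∀ w ∈ V, DifferentiableAt ℝ (fun x => f (x, w)) t := by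
      intro f hf t ht w hw
      have h1 : DifferentiableAt ℝ f (t, w) :=
        (hf.contDiffAt (hIV.mem_nhds ⟨ht, hw⟩)).differentiableAt (by simp)
      exact h1.comp t (DifferentiableAt.prodMk differentiableAt_id (differentiableAt_const w))
    have hμd := hdiff μ hμ
    have hφd := hdiff φ hφ
    have hηd := hdiff η hη
    have hμD : ∀ t ∈ I, ∀ w ∈ V,
        HasDerivAt (fun x => μ (x, w)) (μ (t, w) * (μ (t, w) + η (t, w))) t := by
      intro t ht w hw; have := (hμd t ht w hw).hasDerivAt; rwa [eμ t ht w hw] at this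
    have hφD : ∀ t ∈ I, ∀ w ∈ V,
        HasDerivAt (fun x => φ (x, w)) (φ (t, w) * (μ (t, w) + η (t, w))) t := by
      intro t ht w hw; have := (hφd t ht w hw).hasDerivAt; rwa [eφ t ht w hw] at this
    have hηD : ∀ t ∈ I, ∀ w ∈ V,
        HasDerivAt (fun x => η (x, w)) (η (t, w) * (μ (t, w) + η (t, w))) t := by
      intro t ht w hw; have := (hηd t ht w hw).hasDerivAt; rwa [eη t ht w hw] at this
    -- ratios μ/η and φ/η are constant in t
    have hratμ : ∀ t ∈ I, ∀ w ∈ V,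
        μ (t, w) / η (t, w) = μ (t₀, w) / η (t₀, w) := by
      intro t ht w hw
      refine aux_const_of_hasDerivAt_zero hIconv (f := fun x => μ (x, w) / η (x, w)) ?_ ht ht₀
      intro s hs
      have h := (hμD s hs w hw).div (hηD s hs w hw) (hηne s hs w hw)
      refine h.congr_deriv ?_
      have hη0 := hηne s hs w hw
      rw [div_eq_zero_iff]; left; ring
    have hratφ : ∀ t ∈ I, ∀ w ∈ V,
        φ (t, w) / η (t, w) = φ (t₀, w) / η (t₀, w) := by
      intro t ht w hw
      refine aux_const_of_hasDerivAt_zero hIconv (f := fun x => φ (x, w) / η (x, w)) ?_ ht ht₀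
      intro s hs
      have h := (hφD s hs w hw).div (hηD s hs w hw) (hηne s hs w hw)
      refine h.congr_deriv ?_
      have hη0 := hηne s hs w hw
      rw [div_eq_zero_iff]; left; ring
    -- define S, R, F
    set S : (Fin 2 → ℝ) → ℝ := fun w => μ (t₀, w) / η (t₀, w) with hS
    set R : (Fin 2 → ℝ) → ℝ := fun w => - φ (t₀, w) / η (t₀, w) with hR
    set F : (Fin 2 → ℝ) → ℝ := fun w => 1 / η (t₀, w) + (S w + 1) * t₀ with hF
    have hS1 : ∀ w ∈ V, S w + 1 = (μ (t₀, w) + η (t₀, w)) / η (t₀, w) := by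
      intro w hw
      have hη0 := hηne t₀ ht₀ w hw
      field_simp [hS]
      simp only [hS]; rw [add_mul, div_mul_cancel₀ _ hη0, one_mul]
    have hS1ne : ∀ w ∈ V, S w + 1 ≠ 0 := by
      intro w hw
      rw [hS1 w hw]
      exact div_ne_zero (hsumne t₀ ht₀ w hw) (hηne t₀ ht₀ w hw)
    -- the key: g(t) = 1/η(t,w) + (S w + 1) * t is constant, equal to F w
    have hg : ∀ t ∈ I, ∀ w ∈ V, 1 / η (t, w) + (S w + 1) * t = F w := by
      intro t ht w hw
      refine aux_const_of_hasDerivAt_zero hIconv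
        (f := fun x => 1 / η (x, w) + (S w + 1) * x) ?_ ht ht₀
      intro s hs
      have h1 : HasDerivAt (fun x => 1 / η (x, w))
          (-(η (s, w) * (μ (s, w) + η (s, w))) / (η (s, w))^2) s := by
        exact ((hasDerivAt_const s (1:ℝ)).div (hηD s hs w hw) (hηne s hs w hw)).congr_deriv (by ring)
      have h2 := h1.add ((hasDerivAt_id s).const_mul (S w + 1))
      refine h2.congr_deriv ?_
      have hη0 := hηne s hs w hw
      have hμη : μ (s, w) / η (s, w) = S w := hratμ s hs w hw
      have : μ (s, w) = S w * η (s, w) := by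
        field_simp at hμη; linarith [hμη]
      rw [this]
      rw [div_add' _ _ _ (pow_ne_zero 2 hη0), div_eq_zero_iff]; left; ring
    have hkey : ∀ t ∈ I, ∀ w ∈ V, F w - (S w + 1) * t = 1 / η (t, w) := by
      intro t ht w hw
      have := hg t ht w hw
      linarith
    refine ⟨S, F, R, ?_, ?_, ?_, ?_, ?_⟩
    · exact (hμ.comp (contDiff_const.prodMk contDiff_id).contDiffOn
        (fun w hw => ⟨ht₀, hw⟩)).div
        (hη.comp (contDiff_const.prodMk contDiff_id).contDiffOn (fun w hw => ⟨ht₀, hw⟩))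
        (fun w hw => hηne t₀ ht₀ w hw)
    · refine ContDiffOn.add ?_ ?_
      · exact ContDiffOn.div contDiffOn_const
          (hη.comp (contDiff_const.prodMk contDiff_id).contDiffOn (fun w hw => ⟨ht₀, hw⟩))
          (fun w hw => hηne t₀ ht₀ w hw)
      · refine ContDiffOn.mul (ContDiffOn.add ?_ contDiffOn_const) contDiffOn_const
        exact (hμ.comp (contDiff_const.prodMk contDiff_id).contDiffOn
          (fun w hw => ⟨ht₀, hw⟩)).div
          (hη.comp (contDiff_const.prodMk contDiff_id).contDiffOn (fun w hw => ⟨ht₀, hw⟩))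
          (fun w hw => hηne t₀ ht₀ w hw)
    · exact ((hφ.comp (contDiff_const.prodMk contDiff_id).contDiffOn
        (fun w hw => ⟨ht₀, hw⟩)).neg).div
        (hη.comp (contDiff_const.prodMk contDiff_id).contDiffOn (fun w hw => ⟨ht₀, hw⟩))
        (fun w hw => hηne t₀ ht₀ w hw)
    · intro w hw
      refine ⟨?_, hS1ne w hw⟩
      simp only [hR]
      exact div_ne_zero (neg_ne_zero.2 (hφne t₀ ht₀ w hw)) (hηne t₀ ht₀ w hw)
    · intro t ht w hw
      have hη0 := hηne t ht w hw
      have hk := hkey t ht w hw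
      have hden : F w - (S w + 1) * t ≠ 0 := by
        rw [hk]; exact one_div_ne_zero hη0
      have hηeq : η (t, w) = 1 / (F w - (S w + 1) * t) := by
        rw [hk]; field_simp
      refine ⟨hden, ?_, ?_, hηeq⟩
      · have hμη : μ (t, w) / η (t, w) = S w := hratμ t ht w hw
        have : μ (t, w) = S w * η (t, w) := by field_simp at hμη; linarith [hμη]
        rw [this, hηeq]; field_simp
      · have hφη : φ (t, w) / η (t, w) = - R w := by
          rw [hratφ t ht w hw]; simp [hR]; ring
        have : φ (t, w) = - R w * η (t, w) := by field_simp at hφη; linarith [hφη]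
        rw [this, hηeq]; field_simp
  · refine ⟨fun _ => 0, fun _ => 1, fun _ => 1, contDiffOn_const, contDiffOn_const,
      contDiffOn_const, fun w hw => ⟨one_ne_zero, by norm_num⟩, fun t ht => ?_⟩
    exact absurd ⟨t, ht⟩ hI
end

section
/- Let U ⊆ ℝ³ be open, let g be the constant 3×3 matrix with g¹² = g²¹ = 1 and all other entries 0, and let b^{ij}_k : U → ℝ (i,j,k ∈ {1,2,3}) be smooth functions such that the pair (g, b) satisfies Grinberg's conditions on U. Then b^{ji}_k = −b^{ij}_k for all i,j,k; b^{ij}_k = 0 for all triples (i,j,k) with i ≠ j except those with k = 3; and the functions μ = b¹²₃, ν = b¹³₃, φ = b²³₃ satisfy on U: ∂₁μ = μφ, ∂₁ν = νφ, ∂₁φ = φ², ∂₂μ = μν, ∂₂ν = ν², ∂₂φ = νφ. -/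
/-- for the three-component rank-two metric with `g¹² = g²¹ = 1` and all
other entries zero, Grinberg's conditions give antisymmetry of `b`, the vanishing of all
`b^{ij}_k` with `i ≠ j` except those with `k = 3`, and the differential system for
`μ = b¹²₃`, `ν = b¹³₃`, `φ = b²³₃`. (Indices are 0-based.) -/
theorem stmt_10 (U : Set (Fin 3 → ℝ)) (hU : IsOpen U)
    (b : Fin 3 → Fin 3 → Fin 3 → (Fin 3 → ℝ) → ℝ)
    (hb : ∀ i j k, ContDiffOn ℝ (⊤ : ℕ∞) (b i j k) U)
    (hG : GrinbergConds U !![(0 : ℝ), 1, 0; 1, 0, 0; 0, 0, 0] b) :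
    ∀ u ∈ U,
      (∀ i j k : Fin 3, b j i k u = - b i j k u) ∧
      (∀ i j k : Fin 3, i ≠ j → k ≠ 2 → b i j k u = 0) ∧
      pd 0 (b 0 1 2) u = b 0 1 2 u * b 1 2 2 u ∧
      pd 0 (b 0 2 2) u = b 0 2 2 u * b 1 2 2 u ∧
      pd 0 (b 1 2 2) u = (b 1 2 2 u) ^ 2 ∧
      pd 1 (b 0 1 2) u = b 0 1 2 u * b 0 2 2 u ∧
      pd 1 (b 0 2 2) u = (b 0 2 2 u) ^ 2 ∧
      pd 1 (b 1 2 2) u = b 0 2 2 u * b 1 2 2 u := by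
  obtain ⟨hG1, hG2, hG3, hG4, hG5⟩ := hG
  have hanti : ∀ u ∈ U, ∀ i j k : Fin 3, b j i k u = - b i j k u := by
    intro u hu i j k; have := hG2 i j k u hu; linarith
  have hdiag : ∀ u ∈ U, ∀ i k : Fin 3, b i i k u = 0 := by
    intro u hu i k; have := hG2 i i k u hu; linarith
  have h20 : ∀ u ∈ U, ∀ i : Fin 3, b 2 i 0 u = 0 := by
    intro u hu i
    have h := hG3 i 1 2 u hu
    simp [Fin.sum_univ_three, Matrix.cons_val_two, Matrix.tail_cons,
      Matrix.vecHead, Matrix.vecTail] at h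
    linarith
  have h21 : ∀ u ∈ U, ∀ i : Fin 3, b 2 i 1 u = 0 := by
    intro u hu i
    have h := hG3 i 0 2 u hu
    simp [Fin.sum_univ_three, Matrix.cons_val_two, Matrix.tail_cons,
      Matrix.vecHead, Matrix.vecTail] at h
    linarith
  have hrel : ∀ u ∈ U, ∀ i : Fin 3, b 1 i 1 u = b 0 i 0 u := by
    intro u hu i
    have h := hG3 i 1 0 u hu
    simp [Fin.sum_univ_three, Matrix.cons_val_two, Matrix.tail_cons,
      Matrix.vecHead, Matrix.vecTail] at h
    linarith
  have z : ∀ u ∈ U, ∀ i j k : Fin 3, i ≠ j → k ≠ 2 → b i j k u = 0 := by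
    intro u hu i j k hij hk
    have e1 : b 1 0 1 u = 0 := by rw [hrel u hu 0]; exact hdiag u hu 0 0
    have e2 : b 0 1 0 u = 0 := by
      have := hrel u hu 1; rw [hdiag u hu 1 1] at this; linarith
    have e3 : b 0 1 1 u = 0 := by rw [hanti u hu 1 0 1, e1]; ring
    have e4 : b 1 0 0 u = 0 := by rw [hanti u hu 0 1 0, e2]; ring
    have e5 : b 0 2 0 u = 0 := by rw [hanti u hu 2 0 0, h20 u hu 0]; ring
    have e6 : b 0 2 1 u = 0 := by rw [hanti u hu 2 0 1, h21 u hu 0]; ring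
    have e7 : b 1 2 0 u = 0 := by rw [hanti u hu 2 1 0, h20 u hu 1]; ring
    have e8 : b 1 2 1 u = 0 := by rw [hanti u hu 2 1 1, h21 u hu 1]; ring
    fin_cases i <;> fin_cases j <;> fin_cases k <;>
      first
        | exact absurd rfl hij
        | exact absurd rfl hk
        | exact e1 | exact e2 | exact e3 | exact e4
        | exact e5 | exact e6 | exact e7 | exact e8
        | exact hdiag u hu _ _
        | exact h20 u hu _
        | exact h21 u hu _
  have pz : ∀ (i j k : Fin 3), i ≠ j → k ≠ 2 → ∀ (r : Fin 3), ∀ u ∈ U, pd r (b i j k) u = 0 := by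
    intro i j k hij hk r u hu
    have h : (b i j k) =ᶠ[nhds u] fun _ => (0:ℝ) :=
      Filter.eventuallyEq_of_mem (hU.mem_nhds hu) (fun v hv => z v hv i j k hij hk)
    unfold pd; rw [h.fderiv_eq]; simp
  intro u hu
  have d0 : ∀ k : Fin 3, b 0 0 k u = 0 := fun k => hdiag u hu 0 k
  have d1 : ∀ k : Fin 3, b 1 1 k u = 0 := fun k => hdiag u hu 1 k
  have d2 : ∀ k : Fin 3, b 2 2 k u = 0 := fun k => hdiag u hu 2 k
  have a10 : ∀ k : Fin 3, b 1 0 k u = -b 0 1 k u := fun k => hanti u hu 0 1 k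
  have a20 : ∀ k : Fin 3, b 2 0 k u = -b 0 2 k u := fun k => hanti u hu 0 2 k
  have a21 : ∀ k : Fin 3, b 2 1 k u = -b 1 2 k u := fun k => hanti u hu 1 2 k
  have z010 : b 0 1 0 u = 0 := z u hu 0 1 0 (by decide) (by decide)
  have z011 : b 0 1 1 u = 0 := z u hu 0 1 1 (by decide) (by decide)
  have z020 : b 0 2 0 u = 0 := z u hu 0 2 0 (by decide) (by decide)
  have z021 : b 0 2 1 u = 0 := z u hu 0 2 1 (by decide) (by decide)
  have z120 : b 1 2 0 u = 0 := z u hu 1 2 0 (by decide) (by decide)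
  have z121 : b 1 2 1 u = 0 := z u hu 1 2 1 (by decide) (by decide)
  have p1 : pd 2 (b 0 1 0) u = 0 := pz 0 1 0 (by decide) (by decide) 2 u hu
  have p2 : pd 2 (b 0 1 1) u = 0 := pz 0 1 1 (by decide) (by decide) 2 u hu
  have p3 : pd 2 (b 0 2 0) u = 0 := pz 0 2 0 (by decide) (by decide) 2 u hu
  have p4 : pd 2 (b 0 2 1) u = 0 := pz 0 2 1 (by decide) (by decide) 2 u hu
  have p5 : pd 2 (b 1 2 0) u = 0 := pz 1 2 0 (by decide) (by decide) 2 u hu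
  have p6 : pd 2 (b 1 2 1) u = 0 := pz 1 2 1 (by decide) (by decide) 2 u hu
  refine ⟨hanti u hu, z u hu, ?_, ?_, ?_, ?_, ?_, ?_⟩
  · have h := hG4 1 0 1 2 u hu
    simp only [Fin.sum_univ_three, Matrix.cons_val_zero, Matrix.cons_val_one,
      Matrix.cons_val_two, Matrix.head_cons, Matrix.tail_cons, Matrix.vecHead,
      Matrix.vecTail, Matrix.of_apply, Matrix.cons_val', Matrix.empty_val',
      Matrix.cons_val_fin_one, Function.comp] at h
    simp only [d0, d1, d2, a10, a20, a21, z010, z011, z020, z021, z120, z121,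
      p1, p2, p3, p4, p5, p6] at h
    linarith [h]
  · have h := hG4 1 0 2 2 u hu
    simp only [Fin.sum_univ_three, Matrix.cons_val_zero, Matrix.cons_val_one,
      Matrix.cons_val_two, Matrix.head_cons, Matrix.tail_cons, Matrix.vecHead,
      Matrix.vecTail, Matrix.of_apply, Matrix.cons_val', Matrix.empty_val',
      Matrix.cons_val_fin_one, Function.comp] at h
    simp only [d0, d1, d2, a10, a20, a21, z010, z011, z020, z021, z120, z121,
      p1, p2, p3, p4, p5, p6] at h
    linarith [h]
  · have h := hG4 1 1 2 2 u hu
    simp only [Fin.sum_univ_three, Matrix.cons_val_zero, Matrix.cons_val_one,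
      Matrix.cons_val_two, Matrix.head_cons, Matrix.tail_cons, Matrix.vecHead,
      Matrix.vecTail, Matrix.of_apply, Matrix.cons_val', Matrix.empty_val',
      Matrix.cons_val_fin_one, Function.comp] at h
    simp only [d0, d1, d2, a10, a20, a21, z010, z011, z020, z021, z120, z121,
      p1, p2, p3, p4, p5, p6] at h
    nlinarith [h]
  · have h := hG4 0 0 1 2 u hu
    simp only [Fin.sum_univ_three, Matrix.cons_val_zero, Matrix.cons_val_one,
      Matrix.cons_val_two, Matrix.head_cons, Matrix.tail_cons, Matrix.vecHead,
      Matrix.vecTail, Matrix.of_apply, Matrix.cons_val', Matrix.empty_val',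
      Matrix.cons_val_fin_one, Function.comp] at h
    simp only [d0, d1, d2, a10, a20, a21, z010, z011, z020, z021, z120, z121,
      p1, p2, p3, p4, p5, p6] at h
    linarith [h]
  · have h := hG4 0 0 2 2 u hu
    simp only [Fin.sum_univ_three, Matrix.cons_val_zero, Matrix.cons_val_one,
      Matrix.cons_val_two, Matrix.head_cons, Matrix.tail_cons, Matrix.vecHead,
      Matrix.vecTail, Matrix.of_apply, Matrix.cons_val', Matrix.empty_val',
      Matrix.cons_val_fin_one, Function.comp] at h
    simp only [d0, d1, d2, a10, a20, a21, z010, z011, z020, z021, z120, z121,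
      p1, p2, p3, p4, p5, p6] at h
    nlinarith [h]
  · have h := hG4 0 1 2 2 u hu
    simp only [Fin.sum_univ_three, Matrix.cons_val_zero, Matrix.cons_val_one,
      Matrix.cons_val_two, Matrix.head_cons, Matrix.tail_cons, Matrix.vecHead,
      Matrix.vecTail, Matrix.of_apply, Matrix.cons_val', Matrix.empty_val',
      Matrix.cons_val_fin_one, Function.comp] at h
    simp only [d0, d1, d2, a10, a20, a21, z010, z011, z020, z021, z120, z121,
      p1, p2, p3, p4, p5, p6] at h
    linarith [h]
end

section
/- Let G be the constant 3×3 diagonal matrix diag(1, 1, 0), let B ⊆ ℝ² be open and convex, V ⊆ ℝ an open interval, and let φ : B × V → ℝ³ be a smooth map whose Jacobian J(u) satisfies J(u) G J(u)ᵀ = G and J(u) G (D_w J(u))ᵀ = 0 for every u ∈ B × V and every direction w ∈ ℝ³ (where D_w J denotes the directional derivative of the matrix-valued map J). Then there exist a constant orthogonal 2×2 real matrix O = (O_{ab}) and smooth functions f₁, f₂, f₃ : V → ℝ such that φ¹(u) = O₁₁ u¹ + O₁₂ u² + f₁(u³), φ²(u) = O₂₁ u¹ + O₂₂ u² + f₂(u³),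 and φ³(u) = f₃(u³) for all u ∈ B × V. -/
open Matrix

lemma clm_apply_three (L : (Fin 3 → ℝ) →L[ℝ] ℝ) (w : Fin 3 → ℝ) :
    L w = w 0 * L (Pi.single 0 1) + w 1 * L (Pi.single 1 1) + w 2 * L (Pi.single 2 1) := by
  have hw : w = w 0 • (Pi.single 0 1 : Fin 3 → ℝ) + w 1 • (Pi.single 1 1 : Fin 3 → ℝ)
      + w 2 • (Pi.single 2 1 : Fin 3 → ℝ) := by
    funext i; fin_cases i <;> simp [Pi.single_apply]
  conv_lhs => rw [hw]
  simp [_root_.map_add, _root_.map_smul, smul_eq_mul]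

lemma seg_const {U : Set (Fin 3 → ℝ)} (hUconv : Convex ℝ U)
    {g : (Fin 3 → ℝ) → ℝ} (hg : ∀ p ∈ U, DifferentiableAt ℝ g p)
    {u v : Fin 3 → ℝ} (hu : u ∈ U) (hv : v ∈ U)
    (hd : ∀ p ∈ U, fderiv ℝ g p (v - u) = 0) : g u = g v := by
  set d : Fin 3 → ℝ := v - u with hdd
  have hseg : ∀ t ∈ Set.Icc (0:ℝ) 1, u + t • d ∈ U := by
    intro t ht
    have h := hUconv hu hv (by linarith [ht.2] : (0:ℝ) ≤ 1 - t) ht.1 (by ring)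
    convert h using 1
    funext i
    simp [hdd, Pi.sub_apply, Pi.smul_apply, smul_eq_mul]
    ring
  have hh : ∀ t ∈ Set.Icc (0:ℝ) 1, HasDerivAt (fun s : ℝ => g (u + s • d)) 0 t := by
    intro t ht
    have hp := hseg t ht
    have hγ : HasDerivAt (fun s : ℝ => u + s • d) d t := by
      simpa using ((hasDerivAt_id t).smul_const d).const_add u
    have := (hg _ hp).hasFDerivAt.comp_hasDerivAt t hγ
    rw [hd _ hp] at this
    exact this
  have key := constant_of_derivWithin_zero
      (f := fun s : ℝ => g (u + s • d)) (a := 0) (b := 1)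
      (fun t ht => ((hh t ht).differentiableAt.differentiableWithinAt))
      (fun t ht => by
        have ht' : t ∈ Set.Icc (0:ℝ) 1 := Set.mem_Icc_of_Ico ht
        rw [(hh t ht').differentiableAt.derivWithin ((uniqueDiffOn_Icc one_pos) t ht')]
        exact (hh t ht').deriv)
  have h0 := key 1 (by norm_num)
  simp only [one_smul, zero_smul, add_zero] at h0
  have hv' : u + d = v := by rw [hdd]; abel
  rw [hv'] at h0
  exact h0.symm

/-- restricted admissible transformations for the rank-two three-component
metric `G = diag(1,1,0)`: any smooth map on `B × V` whose Jacobian satisfies `J G Jᵀ = G`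
and `J G (D_w J)ᵀ = 0` for every direction `w` is a constant orthogonal rotation of
`(u¹, u²)` plus smooth functions of `u³`, with third component a function of `u³` only. -/
theorem stmt_16 (B : Set (ℝ × ℝ)) (hBopen : IsOpen B) (hBconv : Convex ℝ B)
    (V : Set ℝ) (hVopen : IsOpen V) (hVconv : Convex ℝ V)
    (U : Set (Fin 3 → ℝ)) (hU : U = {u | (u 0, u 1) ∈ B ∧ u 2 ∈ V})
    (φ : (Fin 3 → ℝ) → (Fin 3 → ℝ))
    (hφ : ContDiffOn ℝ (⊤ : ℕ∞) φ U)
    (G : Matrix (Fin 3) (Fin 3) ℝ) (hGdef : G = !![1, 0, 0; 0, 1, 0; 0, 0, 0])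
    (J : (Fin 3 → ℝ) → Matrix (Fin 3) (Fin 3) ℝ)
    (hJ : ∀ u i j, J u i j = fderiv ℝ (fun v => φ v i) u (Pi.single j 1))
    (h1 : ∀ u ∈ U, J u * G * (J u)ᵀ = G)
    (h2 : ∀ u ∈ U, ∀ w : Fin 3 → ℝ,
      J u * G * (Matrix.of fun i j => fderiv ℝ (fun v => J v i j) u w)ᵀ = 0) :
    ∃ O : Matrix (Fin 2) (Fin 2) ℝ, O * Oᵀ = 1 ∧
      ∃ f₁ f₂ f₃ : ℝ → ℝ,
        ContDiffOn ℝ (⊤ : ℕ∞) f₁ V ∧ ContDiffOn ℝ (⊤ : ℕ∞) f₂ V ∧ ContDiffOn ℝ (⊤ : ℕ∞) f₃ V ∧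
        ∀ u ∈ U,
          φ u 0 = O 0 0 * u 0 + O 0 1 * u 1 + f₁ (u 2) ∧
          φ u 1 = O 1 0 * u 0 + O 1 1 * u 1 + f₂ (u 2) ∧
          φ u 2 = f₃ (u 2) := by
  classical
  subst hGdef
  -- basic structure of U
  have hUopen : IsOpen U := by
    rw [hU]
    have : {u : Fin 3 → ℝ | (u 0, u 1) ∈ B ∧ u 2 ∈ V}
        = (fun u : Fin 3 → ℝ => ((u 0, u 1), u 2)) ⁻¹' (B ×ˢ V) := by
      ext u; simp [Set.mem_prod]
    rw [this]
    exact (hBopen.prod hVopen).preimage (by fun_prop)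
  have hUconv : Convex ℝ U := by
    rw [hU]
    intro u hu v hv a b ha hb hab
    refine ⟨?_, hVconv hu.2 hv.2 ha hb hab⟩
    have h := hBconv hu.1 hv.1 ha hb hab
    have : a • ((u 0, u 1) : ℝ × ℝ) + b • (v 0, v 1)
        = ((a • u + b • v) 0, (a • u + b • v) 1) := by
      simp [Prod.ext_iff, Pi.add_apply, Pi.smul_apply, smul_eq_mul]
    rwa [this] at h
  rcases Set.eq_empty_or_nonempty U with hE | ⟨c, hc⟩
  · exact ⟨1, by simp, 0, 0, 0, contDiffOn_const, contDiffOn_const, contDiffOn_const,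
      fun u hu => absurd hu (by rw [hE]; exact Set.notMem_empty u)⟩
  -- differentiability facts
  have hφk : ∀ k, ContDiffOn ℝ (⊤ : ℕ∞) (fun v => φ v k) U := fun k => contDiffOn_pi.mp hφ k
  have hφdiff : ∀ k, ∀ u ∈ U, DifferentiableAt ℝ (fun v => φ v k) u := fun k u hu =>
    ((hφk k).differentiableOn (by simp)).differentiableAt (hUopen.mem_nhds hu)
  have hJfun : ∀ k a, (fun v => J v k a)
      = fun v => fderiv ℝ (fun x => φ x k) v (Pi.single a 1) :=
    fun k a => funext fun v => hJ v k a
  have hJck : ∀ k a, ContDiffOn ℝ (⊤ : ℕ∞) (fun v => J v k a) U := by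
    intro k a
    rw [hJfun]
    exact ((hφk k).fderiv_of_isOpen hUopen (by simp)).clm_apply contDiffOn_const
  have hJdiff : ∀ k a, ∀ u ∈ U, DifferentiableAt ℝ (fun v => J v k a) u := fun k a u hu =>
    ((hJck k a).differentiableOn (by simp)).differentiableAt (hUopen.mem_nhds hu)
  -- pointwise consequences of h1
  have horth : ∀ u ∈ U,
      J u 0 0 ^ 2 + J u 0 1 ^ 2 = 1 ∧ J u 1 0 ^ 2 + J u 1 1 ^ 2 = 1 ∧
      J u 0 0 * J u 1 0 + J u 0 1 * J u 1 1 = 0 ∧ J u 2 0 = 0 ∧ J u 2 1 = 0 := by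
    intro u hu
    have h := h1 u hu
    have e00 := congrFun (congrFun h 0) 0
    have e01 := congrFun (congrFun h 0) 1
    have e11 := congrFun (congrFun h 1) 1
    have e22 := congrFun (congrFun h 2) 2
    simp [Matrix.mul_apply, Fin.sum_univ_three, Matrix.vecHead, Matrix.vecTail]
      at e00 e01 e11 e22
    refine ⟨by nlinarith, by nlinarith, by nlinarith,
      by nlinarith [sq_nonneg (J u 2 0), sq_nonneg (J u 2 1)],
      by nlinarith [sq_nonneg (J u 2 0), sq_nonneg (J u 2 1)]⟩
  -- consequences of h2 : all directional derivatives of the first two columns of J vanish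
  have hfd0 : ∀ u ∈ U, ∀ w : Fin 3 → ℝ, ∀ k,
      fderiv ℝ (fun v => J v k 0) u w = 0 ∧ fderiv ℝ (fun v => J v k 1) u w = 0 := by
    intro u hu w k
    have h := h2 u hu w
    have eq0 := congrFun (congrFun h 0) k
    have eq1 := congrFun (congrFun h 1) k
    simp [Matrix.mul_apply, Fin.sum_univ_three] at eq0 eq1
    obtain ⟨o1, o2, o3, -, -⟩ := horth u hu
    set x := fderiv ℝ (fun v => J v k 0) u w with hx
    set y := fderiv ℝ (fun v => J v k 1) u w with hy
    set p := J u 0 0; set q := J u 0 1; set r := J u 1 0; set s := J u 1 1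
    have hdet : (p * s - q * r) ^ 2 = 1 := by nlinarith
    have hxx : (p * s - q * r) * x = 0 := by linear_combination s * eq0 - q * eq1
    have hyy : (p * s - q * r) * y = 0 := by linear_combination p * eq1 - r * eq0
    constructor
    · calc x = (p * s - q * r) ^ 2 * x := by rw [hdet]; ring
      _ = (p * s - q * r) * ((p * s - q * r) * x) := by ring
      _ = 0 := by rw [hxx]; ring
    · calc y = (p * s - q * r) ^ 2 * y := by rw [hdet]; ring
      _ = (p * s - q * r) * ((p * s - q * r) * y) := by ring
      _ = 0 := by rw [hyy]; ring
  -- constancy of the first two columns of J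
  have hJconst : ∀ k, ∀ u ∈ U, J u k 0 = J c k 0 ∧ J u k 1 = J c k 1 := by
    intro k u hu
    constructor
    · exact seg_const hUconv (hJdiff k 0) hu hc (fun p hp => (hfd0 p hp _ k).1)
    · exact seg_const hUconv (hJdiff k 1) hu hc (fun p hp => (hfd0 p hp _ k).2)
  -- the orthogonal matrix
  refine ⟨!![J c 0 0, J c 0 1; J c 1 0, J c 1 1], ?_, ?_⟩
  · obtain ⟨o1, o2, o3, -, -⟩ := horth c hc
    ext i j
    fin_cases i <;> fin_cases j <;>
      simp [Matrix.mul_apply, Matrix.transpose_apply, Fin.sum_univ_two, Matrix.one_apply,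
        Matrix.vecHead, Matrix.vecTail] <;>
      nlinarith
  -- the curve t ↦ (c 0, c 1, t)
  set γ : ℝ → (Fin 3 → ℝ) := fun t i => if i = 2 then t else c i with hγdef
  have hγU : ∀ t ∈ V, γ t ∈ U := by
    intro t ht
    rw [hU]
    rw [hU] at hc
    exact ⟨by simpa [hγdef] using hc.1, by simpa [hγdef] using ht⟩
  have hγcd : ContDiff ℝ (⊤ : ℕ∞) γ := by
    apply contDiff_pi.mpr
    intro i
    fin_cases i <;> simp [hγdef] <;> first | exact contDiff_const | exact contDiff_id
  have hfcd : ∀ k, ContDiffOn ℝ (⊤ : ℕ∞) (fun t => φ (γ t) k) V := by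
    intro k
    exact (hφk k).comp (hγcd.contDiffOn) hγU
  -- the slice-constancy argument
  have hslice : ∀ k (A0 A1 : ℝ), (∀ p ∈ U, J p k 0 = A0) → (∀ p ∈ U, J p k 1 = A1) →
      ∀ u ∈ U, φ u k - (A0 * u 0 + A1 * u 1) = φ (γ (u 2)) k - (A0 * c 0 + A1 * c 1) := by
    intro k A0 A1 hA0 hA1 u hu
    have hu2 : u 2 ∈ V := by rw [hU] at hu; exact hu.2
    have hγu : γ (u 2) ∈ U := hγU _ hu2
    set L : (Fin 3 → ℝ) →L[ℝ] ℝ :=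
      A0 • (ContinuousLinearMap.proj 0 : (Fin 3 → ℝ) →L[ℝ] ℝ)
        + A1 • (ContinuousLinearMap.proj 1 : (Fin 3 → ℝ) →L[ℝ] ℝ) with hLdef
    have hLapp : ∀ v, L v = A0 * v 0 + A1 * v 1 := by
      intro v; simp [hLdef]
    have hgd : ∀ p ∈ U, HasFDerivAt (fun v => φ v k - L v)
        (fderiv ℝ (fun v => φ v k) p - L) p := fun p hp =>
      (hφdiff k p hp).hasFDerivAt.sub L.hasFDerivAt
    have hdzero : ∀ p ∈ U, fderiv ℝ (fun v => φ v k - L v) p (γ (u 2) - u) = 0 := by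
      intro p hp
      rw [(hgd p hp).fderiv]
      have hw2 : (γ (u 2) - u) 2 = 0 := by simp [hγdef]
      have happ := clm_apply_three (fderiv ℝ (fun v => φ v k) p) (γ (u 2) - u)
      simp only [ContinuousLinearMap.sub_apply]
      rw [happ, hLapp, ← hJ p k 0, ← hJ p k 1, ← hJ p k 2, hA0 p hp, hA1 p hp, hw2]
      ring
    have key := seg_const hUconv (fun p hp => (hgd p hp).differentiableAt) hu hγu hdzero
    have e0 : γ (u 2) 0 = c 0 := by simp [hγdef]
    have e1 : γ (u 2) 1 = c 1 := by simp [hγdef]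
    have key' : φ u k - (A0 * u 0 + A1 * u 1)
        = φ (γ (u 2)) k - (A0 * c 0 + A1 * c 1) := by
      have := key
      rw [hLapp, hLapp, e0, e1] at this
      exact this
    exact key'
  -- assemble
  refine ⟨fun t => φ (γ t) 0 - (J c 0 0 * c 0 + J c 0 1 * c 1),
    fun t => φ (γ t) 1 - (J c 1 0 * c 0 + J c 1 1 * c 1),
    fun t => φ (γ t) 2,
    (hfcd 0).sub contDiffOn_const, (hfcd 1).sub contDiffOn_const, hfcd 2, ?_⟩
  intro u hu
  have hz : ∀ p ∈ U, J p 2 0 = (0:ℝ) := fun p hp => (horth p hp).2.2.2.1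
  have hz' : ∀ p ∈ U, J p 2 1 = (0:ℝ) := fun p hp => (horth p hp).2.2.2.2
  have h0 := hslice 0 (J c 0 0) (J c 0 1) (fun p hp => (hJconst 0 p hp).1)
    (fun p hp => (hJconst 0 p hp).2) u hu
  have h1' := hslice 1 (J c 1 0) (J c 1 1) (fun p hp => (hJconst 1 p hp).1)
    (fun p hp => (hJconst 1 p hp).2) u hu
  have h2' := hslice 2 0 0 hz hz' u hu
  refine ⟨?_, ?_, ?_⟩
  · have E0 : (!![J c 0 0, J c 0 1; J c 1 0, J c 1 1]) 0 0 = J c 0 0 := by simp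
    have E1 : (!![J c 0 0, J c 0 1; J c 1 0, J c 1 1]) 0 1 = J c 0 1 := by simp
    rw [E0, E1]; beta_reduce; linarith [h0]
  · have E0 : (!![J c 0 0, J c 0 1; J c 1 0, J c 1 1]) 1 0 = J c 1 0 := by simp
    have E1 : (!![J c 0 0, J c 0 1; J c 1 0, J c 1 1]) 1 1 = J c 1 1 := by simp
    rw [E0, E1]; beta_reduce; linarith [h1']
  · linarith [h2']
end

section
/- Let U = {(u¹, u², u³) ∈ ℝ³ : u³ ≠ 0} and define ψ : U → ℝ³ by ψ(u¹, u², u³) = (u³u¹, u²/u³, u³). Let G be the constant 3×3 matrix with G¹² = G²¹ = 1 and all other entries 0, and let J(u) be the Jacobian matrix of ψ. Then: (i) J(u) G J(u)ᵀ = G for all u ∈ U, so ψ is an admissible transformation for the metric G; but (ii) the non-tensorial term does not vanish: the (2,1) entry of the matrix J(u) G (∂J/∂u³(u))ᵀ equals 1/u³ ≠ 0, so the symbols b^{ij}_k do not transform as components of a (2,1)-tensor under ψ. -/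
open Matrix

/-- the transformation `ψ(u¹,u²,u³) = (u³u¹, u²/u³, u³)` on `{u³ ≠ 0}` is
admissible for the metric `G` with `g¹² = g²¹ = 1` (its Jacobian satisfies `J G Jᵀ = G`),
but the non-tensorial term does not vanish: the (2,1) entry (0-based: (1,0)) of
`J G (∂J/∂u³)ᵀ` equals `1/u³ ≠ 0`, so the symbols `b^{ij}_k` do not transform as
components of a (2,1)-tensor under `ψ`. -/
theorem stmt_17 (ψ : (Fin 3 → ℝ) → (Fin 3 → ℝ))
    (hψ : ∀ u, ψ u = ![u 2 * u 0, u 1 / u 2, u 2])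
    (G : Matrix (Fin 3) (Fin 3) ℝ) (hGdef : G = !![0, 1, 0; 1, 0, 0; 0, 0, 0])
    (J : (Fin 3 → ℝ) → Matrix (Fin 3) (Fin 3) ℝ)
    (hJ : ∀ u i j, J u i j = fderiv ℝ (fun v => ψ v i) u (Pi.single j 1)) :
    ∀ u : Fin 3 → ℝ, u 2 ≠ 0 →
      (J u * G * (J u)ᵀ = G) ∧
      ((J u * G *
          (Matrix.of fun i j => fderiv ℝ (fun v => J v i j) u (Pi.single 2 1))ᵀ) 1 0
        = 1 / u 2) ∧
      (1 / u 2 : ℝ) ≠ 0 := by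
  have hproj : ∀ (k : Fin 3) (w : Fin 3 → ℝ),
      HasFDerivAt (fun v : Fin 3 → ℝ => v k)
        (ContinuousLinearMap.proj k : (Fin 3 → ℝ) →L[ℝ] ℝ) w :=
    fun k w => hasFDerivAt_apply k w
  have hf0 : (fun v : Fin 3 → ℝ => ψ v 0) = fun v => v 2 * v 0 := by
    funext v; rw [hψ]; simp
  have hf1 : (fun v : Fin 3 → ℝ => ψ v 1) = fun v => v 1 * (v 2)⁻¹ := by
    funext v; rw [hψ]; simp [div_eq_mul_inv]
  have hf2 : (fun v : Fin 3 → ℝ => ψ v 2) = fun v => v 2 := by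
    funext v; rw [hψ]; simp
  -- explicit Jacobian on the open set {v | v 2 ≠ 0}
  have hJval : ∀ w : Fin 3 → ℝ, w 2 ≠ 0 →
      J w = !![w 2, 0, w 0; 0, (w 2)⁻¹, -(w 1) / (w 2)^2; 0, 0, 1] := by
    intro w hw
    have h0 : fderiv ℝ (fun v : Fin 3 → ℝ => ψ v 0) w
        = w 2 • (ContinuousLinearMap.proj 0 : (Fin 3 → ℝ) →L[ℝ] ℝ)
          + w 0 • ContinuousLinearMap.proj 2 := by
      rw [hf0]; exact ((hproj 2 w).mul (hproj 0 w)).fderiv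
    have hinv : HasFDerivAt (fun v : Fin 3 → ℝ => (v 2)⁻¹)
        ((-(w 2 ^ 2)⁻¹ : ℝ) • (ContinuousLinearMap.proj 2 : (Fin 3 → ℝ) →L[ℝ] ℝ)) w :=
      (hasDerivAt_inv hw).comp_hasFDerivAt w (hproj 2 w)
    have h1 : fderiv ℝ (fun v : Fin 3 → ℝ => ψ v 1) w
        = w 1 • ((-(w 2 ^ 2)⁻¹ : ℝ) • (ContinuousLinearMap.proj 2 : (Fin 3 → ℝ) →L[ℝ] ℝ))
          + (w 2)⁻¹ • ContinuousLinearMap.proj 1 := by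
      rw [hf1]; exact ((hproj 1 w).mul hinv).fderiv
    have h2 : fderiv ℝ (fun v : Fin 3 → ℝ => ψ v 2) w
        = (ContinuousLinearMap.proj 2 : (Fin 3 → ℝ) →L[ℝ] ℝ) := by
      rw [hf2]; exact (hproj 2 w).fderiv
    ext i j
    rw [hJ]
    fin_cases i <;> fin_cases j <;>
      · simp [h0, h1, h2, Pi.single_apply, Matrix.vecHead, Matrix.vecTail]
        try (field_simp; try ring)
  intro u hu
  have hopen : IsOpen {v : Fin 3 → ℝ | v 2 ≠ 0} :=
    isOpen_ne.preimage (continuous_apply 2)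
  have hmem : {v : Fin 3 → ℝ | v 2 ≠ 0} ∈ nhds u := hopen.mem_nhds hu
  -- derivatives of the first row of J in direction e₃
  have hM0 : fderiv ℝ (fun v => J v 0 0) u (Pi.single 2 1) = 1 := by
    have hev : (fun v => J v 0 0) =ᶠ[nhds u] fun v => v 2 := by
      filter_upwards [hmem] with v hv
      rw [hJval v hv]; simp
    rw [hev.fderiv_eq, (hproj 2 u).fderiv]
    simp
  have hM1 : fderiv ℝ (fun v => J v 0 1) u (Pi.single 2 1) = 0 := by
    have hev : (fun v => J v 0 1) =ᶠ[nhds u] fun _ => (0:ℝ) := by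
      filter_upwards [hmem] with v hv
      rw [hJval v hv]; simp
    rw [hev.fderiv_eq]
    simp
  have hM2 : fderiv ℝ (fun v => J v 0 2) u (Pi.single 2 1) = 0 := by
    have hev : (fun v => J v 0 2) =ᶠ[nhds u] fun v => v 0 := by
      filter_upwards [hmem] with v hv
      rw [hJval v hv]; simp
    rw [hev.fderiv_eq, (hproj 0 u).fderiv]
    simp [Pi.single_apply]
  refine ⟨?_, ?_, one_div_ne_zero hu⟩
  · rw [hJval u hu, hGdef]
    ext i j
    fin_cases i <;> fin_cases j <;>
      · simp [Matrix.mul_apply, Fin.sum_univ_three, Matrix.vecHead, Matrix.vecTail]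
        try field_simp
  · rw [hJval u hu, hGdef]
    simp only [Matrix.mul_apply, Fin.sum_univ_three, Matrix.transpose_apply, Matrix.of_apply]
    rw [hM0, hM1, hM2]
    simp
    try field_simp
end
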